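/- For the Morse–Thue matrix M = [[1,1],[1,1]], the direct limit of ℤ² → ℤ² → ⋯ with bonding map M is isomorphic to ℤ[1/2], the group of dyadic rationals. -/

import Mathlib

/-!
The sum of coordinates `σ : ℤ² → ℤ` satisfies `σ (M v) = 2 σ v`, so the maps `v ↦ σ v / 2ⁱ` on
the `i`-th copy of `ℤ²` are compatible and induce `Φ : lim ℤ² → ℚ`, whose image is `ℤ[1/2]`.
`Φ` is injective because `σ v = 0` forces `M v = 0`: an element killed by `Φ` dies at the next
stage of the system.
-/

open Matrix

/-- The direct limit of the constant system `H → H → H → ⋯` with all bonding maps equal to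
the endomorphism `g`. -/
abbrev DLim (H : Type) [AddCommGroup H] (g : AddMonoid.End H) : Type :=
  AddCommGroup.DirectLimit (fun _ : ℕ => H) (fun i j _ => (g ^ (j - i) : AddMonoid.End H))

noncomputable instance (H : Type) [AddCommGroup H] (g : AddMonoid.End H) :
    AddCommGroup (DLim H g) :=
  AddCommGroup.DirectLimit.addCommGroup _ _

/-- The endomorphism of `ℤᵈ` given by multiplication by an integer matrix. -/
def matEnd {n : Type} [Fintype n] [DecidableEq n] (M : Matrix n n ℤ) :
    AddMonoid.End (n → ℤ) :=
  M.mulVecLin.toAddMonoidHom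

/-- `ℤ[1/2]`: the additive group of dyadic rationals, i.e. the subgroup of `ℚ` generated by
the fractions `1/2ⁿ`. -/
def dyadicRationals : AddSubgroup ℚ :=
  AddSubgroup.closure {q : ℚ | ∃ n : ℕ, q = 1 / 2 ^ n}

namespace DLim

variable {H : Type} [AddCommGroup H] (g : AddMonoid.End H)

noncomputable abbrev of (i : ℕ) : H →+ DLim H g :=
  AddCommGroup.DirectLimit.of (fun _ : ℕ => H) (fun i j _ => (g ^ (j - i) : AddMonoid.End H)) i

lemma of_succ_apply (i : ℕ) (x : H) : of g (i + 1) (g x) = of g i x :=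
  calc of g (i + 1) (g x) = of g (i + 1) ((g ^ (i + 1 - i)) x) := by
        rw [Nat.add_sub_cancel_left, pow_one]
    _ = of g i x := AddCommGroup.DirectLimit.of_f (G := fun _ : ℕ => H)
      (f := fun i j _ => (g ^ (j - i) : AddMonoid.End H)) (Nat.le_succ i) x

variable {g} {K : Type*} [Field K] {r : K} {ψ : H →+ K}

lemma map_pow_apply (hψ : ∀ x, ψ (g x) = r * ψ x) (k : ℕ) (x : H) :
    ψ ((g ^ k) x) = r ^ k * ψ x := by
  induction k with
  | zero => simp
  | succ k ih =>
    rw [pow_succ', AddMonoid.End.coe_mul, Function.comp_apply, hψ, ih, pow_succ', mul_assoc]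

noncomputable def liftScaled (hr : r ≠ 0) (hψ : ∀ x, ψ (g x) = r * ψ x) : DLim H g →+ K :=
  AddCommGroup.DirectLimit.lift _ _ K (fun i => (r ^ i)⁻¹ • ψ) fun i j hij x => by
    obtain ⟨k, rfl⟩ := Nat.exists_eq_add_of_le hij
    change (r ^ (i + k))⁻¹ * ψ ((g ^ (i + k - i)) x) = (r ^ i)⁻¹ * ψ x
    rw [Nat.add_sub_cancel_left, map_pow_apply hψ, pow_add]
    field_simp

variable (hr : r ≠ 0) (hψ : ∀ x, ψ (g x) = r * ψ x)

lemma liftScaled_of (i : ℕ) (x : H) : liftScaled hr hψ (of g i x) = ψ x / r ^ i :=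
  (AddCommGroup.DirectLimit.lift_of _ _ _ _ _).trans (div_eq_inv_mul _ _).symm

lemma liftScaled_injective (hker : ∀ x, ψ x = 0 → g x = 0) :
    Function.Injective (liftScaled hr hψ) := by
  refine (injective_iff_map_eq_zero _).2 fun z hz => ?_
  induction z using AddCommGroup.DirectLimit.induction_on with
  | ih i x =>
    rw [liftScaled_of, div_eq_zero_iff, or_iff_left (pow_ne_zero i hr)] at hz
    rw [← of_succ_apply, hker x hz, map_zero]

lemma mem_range_liftScaled {q : K} :
    q ∈ (liftScaled hr hψ).range ↔ ∃ i x, ψ x / r ^ i = q := by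
  constructor
  · rintro ⟨z, rfl⟩
    induction z using AddCommGroup.DirectLimit.induction_on with
    | ih i x => exact ⟨i, x, (liftScaled_of hr hψ i x).symm⟩
  · rintro ⟨i, x, rfl⟩
    exact ⟨of g i x, liftScaled_of hr hψ i x⟩

end DLim

section AllOnes

variable {n : Type} [Fintype n] [DecidableEq n]

def coordSum : (n → ℤ) →+ ℚ :=
  AddMonoidHom.mk' (fun v => ((∑ i, v i : ℤ) : ℚ)) fun v w => by
    simp [Finset.sum_add_distrib]

lemma matEnd_ones_apply (v : n → ℤ) :
    matEnd (of fun _ _ : n => (1 : ℤ)) v = fun _ => ∑ j, v j := by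
  ext i
  show ((of fun _ _ : n => (1 : ℤ)) *ᵥ v) i = _
  simp [mulVec, dotProduct]

lemma coordSum_matEnd_ones (v : n → ℤ) :
    coordSum (matEnd (of fun _ _ : n => (1 : ℤ)) v) = Fintype.card n * coordSum v := by
  simp [coordSum, matEnd_ones_apply]

lemma matEnd_ones_eq_zero_of_coordSum_eq_zero {v : n → ℤ} (hv : coordSum v = 0) :
    matEnd (of fun _ _ : n => (1 : ℤ)) v = 0 := by
  have hsum : ∑ j, v j = 0 := by
    simp only [coordSum, AddMonoidHom.mk'_apply] at hv
    exact_mod_cast hv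
  ext
  simpa [matEnd_ones_apply] using hsum

end AllOnes

lemma morseThue_matrix_eq_of_const_one : !![1, 1; 1, 1] = of fun (_ _ : Fin 2) => (1 : ℤ) := by
  ext i j
  fin_cases i <;> fin_cases j <;> rfl

noncomputable abbrev morseThueMap :
    DLim (Fin 2 → ℤ) (matEnd (of fun _ _ : Fin 2 => (1 : ℤ))) →+ ℚ :=
  DLim.liftScaled two_ne_zero fun v => by
    simpa using coordSum_matEnd_ones v

lemma range_morseThueMap : morseThueMap.range = dyadicRationals := by
  apply le_antisymm
  · rintro q hq
    obtain ⟨i, v, rfl⟩ := (DLim.mem_range_liftScaled _ _).1 hq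
    rw [div_eq_mul_one_div, coordSum, AddMonoidHom.mk'_apply, ← zsmul_eq_mul]
    exact zsmul_mem
      (AddSubgroup.subset_closure (k := {q : ℚ | ∃ n : ℕ, q = 1 / 2 ^ n}) ⟨i, rfl⟩) _
  · rw [dyadicRationals, AddSubgroup.closure_le]
    rintro _ ⟨i, rfl⟩
    exact (DLim.mem_range_liftScaled _ _).2 ⟨i, Pi.single 0 1, by simp [coordSum]⟩

/-- For the Morse–Thue matrix `M = [[1,1],[1,1]]`, the direct limit of `ℤ² → ℤ² → ⋯` with
bonding map `M` is isomorphic to the group `ℤ[1/2]` of dyadic rationals. -/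
theorem morse_thue_direct_limit :
    Nonempty (DLim (Fin 2 → ℤ) (matEnd (!![1, 1; 1, 1] : Matrix (Fin 2) (Fin 2) ℤ))
      ≃+ dyadicRationals) := by
  rw [morseThue_matrix_eq_of_const_one]
  exact ⟨(AddMonoidHom.ofInjective (DLim.liftScaled_injective _ _
      fun _ => matEnd_ones_eq_zero_of_coordSum_eq_zero)).trans
    (AddEquiv.addSubgroupCongr range_morseThueMap)⟩
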